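/- Let f : ℝ³ → ℂ be a Schwartz function, and for t > 0 set u(q,t) := (2π i t)^{-3/2} ∫_{ℝ³} e^{i|q−y|²/(2t)} f(y) dy and φ₁(q,t) := (i t)^{-3/2} e^{i|q|²/(2t)} ℱf(q/t), where ℱf(k) = (2π)^{-3/2} ∫_{ℝ³} e^{-i k·y} f(y) dy. Then for every t > 0 the L²-norms satisfy ‖u(·,t) − φ₁(·,t)‖ = ‖(e^{i|·|²/(2t)} − 1) f‖, i.e. ∫_{ℝ³} |u(q,t) − φ₁(q,t)|² dq = ∫_{ℝ³} |e^{i|y|²/(2t)} − 1|² |f(y)|² dy. -/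

import Mathlib

open MeasureTheory Complex Filter
open scoped RealInnerProductSpace

noncomputable section

/-- `(i t)^{-3/2} := e^{-3πi/4} t^{-3/2}` for `t > 0`. -/
def cIT (t : ℝ) : ℂ :=
  Complex.exp (-(3 * Real.pi / 4) * Complex.I) * ((t ^ (-(3 / 2) : ℝ) : ℝ) : ℂ)

/-- `(2π)^{-3/2}` as a complex number. -/
def c2pi : ℂ := (((2 * Real.pi) ^ (-(3 / 2) : ℝ) : ℝ) : ℂ)

/-- The Fourier transform `ℱf(k) = (2π)^{-3/2} ∫ e^{-i k·y} f(y) dy`. -/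
def FT (f : EuclideanSpace ℝ (Fin 3) → ℂ) (k : EuclideanSpace ℝ (Fin 3)) : ℂ :=
  c2pi * ∫ y : EuclideanSpace ℝ (Fin 3),
    Complex.exp (-(Complex.I * ((⟪k, y⟫ : ℝ) : ℂ))) * f y

/-- The free evolution `u(q,t) = (2πit)^{-3/2} ∫ e^{i|q−y|²/(2t)} f(y) dy`. -/
def freeU (f : EuclideanSpace ℝ (Fin 3) → ℂ) (q : EuclideanSpace ℝ (Fin 3)) (t : ℝ) : ℂ :=
  c2pi * cIT t *
    ∫ y : EuclideanSpace ℝ (Fin 3),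
      Complex.exp (Complex.I * ((‖q - y‖ ^ 2 / (2 * t) : ℝ) : ℂ)) * f y

/-- The local plane wave `φ₁(q,t) = (it)^{-3/2} e^{i|q|²/(2t)} ℱf(q/t)`. -/
def phi1 (f : EuclideanSpace ℝ (Fin 3) → ℂ) (q : EuclideanSpace ℝ (Fin 3)) (t : ℝ) : ℂ :=
  cIT t * Complex.exp (Complex.I * ((‖q‖ ^ 2 / (2 * t) : ℝ) : ℂ)) * FT f (t⁻¹ • q)

open scoped FourierTransform


lemma iteratedFDeriv_cexp_eq (n : ℕ) (z : ℂ) :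
    iteratedFDeriv ℝ n Complex.exp z =
      Complex.exp z • ContinuousMultilinearMap.mkPiAlgebraFin ℝ n ℂ := by
  induction n generalizing z with
  | zero =>
      ext m
      simp [iteratedFDeriv_zero_apply]
  | succ n ih =>
      have hfun : iteratedFDeriv ℝ n Complex.exp =
          fun w => Complex.exp w • ContinuousMultilinearMap.mkPiAlgebraFin ℝ n ℂ :=
        funext ih
      ext m
      rw [iteratedFDeriv_succ_apply_left, hfun]
      have hder : HasFDerivAt
          (fun w : ℂ => Complex.exp w • ContinuousMultilinearMap.mkPiAlgebraFin ℝ n ℂ)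
          ((((ContinuousLinearMap.toSpanSingleton ℂ (Complex.exp z)).restrictScalars
            ℝ)).smulRight (ContinuousMultilinearMap.mkPiAlgebraFin ℝ n ℂ)) z :=
        (((Complex.hasDerivAt_exp z).hasFDerivAt).restrictScalars ℝ).smul_const (ContinuousMultilinearMap.mkPiAlgebraFin ℝ n ℂ)
      rw [hder.fderiv]
      simp only [ContinuousLinearMap.smulRight_apply,
        ContinuousMultilinearMap.smul_apply, ContinuousMultilinearMap.mkPiAlgebraFin_apply,
        smul_eq_mul]
      have h1 : (ContinuousLinearMap.restrictScalars ℝ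
          (ContinuousLinearMap.toSpanSingleton ℂ (Complex.exp z))) (m 0)
          = m 0 * Complex.exp z := rfl
      have h2 : (List.ofFn (Fin.tail m)).prod = ∏ i : Fin n, m i.succ := by
        rw [show Fin.tail m = fun i : Fin n => m i.succ from rfl, List.prod_ofFn]
      rw [h1, h2, List.prod_ofFn, Fin.prod_univ_succ]
      ring

lemma norm_iteratedFDeriv_cexp_le (n : ℕ) (z : ℂ) (hz : z.re = 0) :
    ‖iteratedFDeriv ℝ n Complex.exp z‖ ≤ 1 := by
  rw [iteratedFDeriv_cexp_eq]
  refine ContinuousMultilinearMap.opNorm_le_bound zero_le_one fun m => ?_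
  simp only [ContinuousMultilinearMap.smul_apply,
    ContinuousMultilinearMap.mkPiAlgebraFin_apply, smul_eq_mul, norm_mul]
  rw [Complex.norm_exp, hz, Real.exp_zero, one_mul, one_mul]
  rw [List.prod_ofFn, norm_prod]

variable {E' F' G' : Type*} [NormedAddCommGroup E'] [NormedSpace ℝ E']
  [NormedAddCommGroup F'] [NormedSpace ℝ F'] [NormedAddCommGroup G'] [NormedSpace ℝ G']

lemma clm_comp_hasTemperateGrowth (g : F' →L[ℝ] G') {f : E' → F'}
    (hf : Function.HasTemperateGrowth f) :
    Function.HasTemperateGrowth fun x => g (f x) := by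
  refine ⟨g.contDiff.comp hf.1, fun n => ?_⟩
  obtain ⟨k, C, hC⟩ := hf.2 n
  refine ⟨k, ‖g‖ * C, fun x => ?_⟩
  have heq : iteratedFDeriv ℝ n (fun x => g (f x)) x
      = g.compContinuousMultilinearMap (iteratedFDeriv ℝ n f x) :=
    g.iteratedFDeriv_comp_left (x := x) hf.1.contDiffAt (by exact_mod_cast le_top)
  rw [heq, mul_assoc]
  exact (g.norm_compContinuousMultilinearMap_le _).trans
    (mul_le_mul_of_nonneg_left (hC x) (norm_nonneg g))

lemma hasTemperateGrowth_normSq {E : Type*} [NormedAddCommGroup E]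
    [InnerProductSpace ℝ E] :
    Function.HasTemperateGrowth fun x : E => ‖x‖ ^ 2 := by
  have hfd : fderiv ℝ (fun x : E => ‖x‖ ^ 2) = ⇑((2 : ℕ) • (innerSL ℝ (E := E))) := by
    funext x
    rw [((hasStrictFDerivAt_norm_sq x).hasFDerivAt).fderiv]
    simp
  refine Function.HasTemperateGrowth.of_fderiv ?_
    (fun x => ((hasStrictFDerivAt_norm_sq x).hasFDerivAt).differentiableAt)
    (k := 2) (C := 1) (fun x => ?_)
  · rw [hfd]
    exact ((2 : ℕ) • (innerSL ℝ (E := E))).hasTemperateGrowth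
  · have : ‖x‖ ≤ 1 + ‖x‖ := by linarith [norm_nonneg x]
    calc ‖‖x‖ ^ 2‖ = ‖x‖ ^ 2 := by simp
    _ ≤ (1 + ‖x‖) ^ 2 := by nlinarith [norm_nonneg x]
    _ = 1 * (1 + ‖x‖) ^ 2 := (one_mul _).symm

lemma hasTemperateGrowth_cexp_of_re_eq_zero {E : Type*} [NormedAddCommGroup E]
    [NormedSpace ℝ E] {φ : E → ℂ} (hφ : Function.HasTemperateGrowth φ)
    (hre : ∀ x, (φ x).re = 0) :
    Function.HasTemperateGrowth fun x => Complex.exp (φ x) := by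
  refine ⟨Complex.contDiff_exp.comp hφ.1, fun n => ?_⟩
  obtain ⟨k, C, hC0, hC⟩ := hφ.norm_iteratedFDeriv_le_uniform n
  refine ⟨k * n, (Nat.factorial n : ℝ) * (C + 1) ^ n, fun x => ?_⟩
  have h1x : (1 : ℝ) ≤ (1 + ‖x‖) ^ k := one_le_pow₀ (by linarith [norm_nonneg x])
  have hD1 : (1 : ℝ) ≤ (C + 1) * (1 + ‖x‖) ^ k := by nlinarith
  have hD : ∀ i, 1 ≤ i → i ≤ n →
      ‖iteratedFDeriv ℝ i φ x‖ ≤ ((C + 1) * (1 + ‖x‖) ^ k) ^ i := by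
    intro i h1 hn
    calc ‖iteratedFDeriv ℝ i φ x‖ ≤ C * (1 + ‖x‖) ^ k := hC i hn x
    _ ≤ (C + 1) * (1 + ‖x‖) ^ k := by nlinarith
    _ ≤ ((C + 1) * (1 + ‖x‖) ^ k) ^ i := le_self_pow₀ hD1 (by omega)
  have hCexp : ∀ i, i ≤ n → ‖iteratedFDeriv ℝ i Complex.exp (φ x)‖ ≤ 1 := fun i _ =>
    norm_iteratedFDeriv_cexp_le i (φ x) (hre x)
  have hcomp := norm_iteratedFDeriv_comp_le Complex.contDiff_exp hφ.1
    (by exact_mod_cast le_top) x hCexp hD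
  calc ‖iteratedFDeriv ℝ n (fun x => Complex.exp (φ x)) x‖
      = ‖iteratedFDeriv ℝ n (Complex.exp ∘ φ) x‖ := rfl
  _ ≤ (Nat.factorial n : ℝ) * 1 * ((C + 1) * (1 + ‖x‖) ^ k) ^ n := hcomp
  _ = (Nat.factorial n : ℝ) * (C + 1) ^ n * (1 + ‖x‖) ^ (k * n) := by
      rw [mul_one, mul_pow, pow_mul, mul_assoc]

lemma hasTemperateGrowth_phase {E : Type*} [NormedAddCommGroup E]
    [InnerProductSpace ℝ E] (c : ℝ) :
    Function.HasTemperateGrowth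
      (fun y : E => Complex.exp (Complex.I * ((c * ‖y‖ ^ 2 : ℝ) : ℂ))) := by
  have L : ℝ →L[ℝ] ℂ := c • (Complex.I • Complex.ofRealCLM)
  have hφ : Function.HasTemperateGrowth
      (fun y : E => (c • (Complex.I • Complex.ofRealCLM)) (‖y‖ ^ 2)) :=
    clm_comp_hasTemperateGrowth _ hasTemperateGrowth_normSq
  have heq : (fun y : E => Complex.exp (Complex.I * ((c * ‖y‖ ^ 2 : ℝ) : ℂ)))
      = fun y : E => Complex.exp ((c • (Complex.I • Complex.ofRealCLM)) (‖y‖ ^ 2)) := by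
    funext y
    congr 1
    simp [Complex.ofRealCLM_apply, Complex.real_smul]
    push_cast
    ring
  rw [heq]
  refine hasTemperateGrowth_cexp_of_re_eq_zero hφ fun x => ?_
  simp only [ContinuousLinearMap.smul_apply, Complex.ofRealCLM_apply, Complex.real_smul,
    Complex.smul_re, Complex.mul_re, Complex.I_re, Complex.I_im, Complex.ofReal_re,
    Complex.ofReal_im, smul_eq_mul]
  simp [← Complex.ofReal_pow]

lemma conj_fourierIntegral (u : EuclideanSpace ℝ (Fin 3) → ℂ) (x : EuclideanSpace ℝ (Fin 3)) :
    VectorFourier.fourierIntegral Real.fourierChar volume (innerₗ (EuclideanSpace ℝ (Fin 3)))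
      (fun ξ => (starRingEnd ℂ) (u ξ)) x = (starRingEnd ℂ) (𝓕⁻ u x) := by
  rw [Real.fourierInv_eq, ← integral_conj]
  rw [VectorFourier.fourierIntegral]
  congr 1
  funext v
  simp only [Circle.smul_def, smul_eq_mul, map_mul]
  congr 1
  rw [Real.fourierChar_apply, Real.fourierChar_apply, ← Complex.exp_conj]
  congr 1
  simp only [map_mul, Complex.conj_I, Complex.conj_ofReal, mul_neg]
  rw [show ((innerₗ (EuclideanSpace ℝ (Fin 3))) v) x = (inner ℝ v x : ℝ) from rfl]
  push_cast
  ring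

lemma plancherel_schwartz (h : SchwartzMap (EuclideanSpace ℝ (Fin 3)) ℂ) :
    (∫ ξ : EuclideanSpace ℝ (Fin 3), ‖𝓕 (⇑h) ξ‖ ^ 2)
      = ∫ x : EuclideanSpace ℝ (Fin 3), ‖h x‖ ^ 2 := by
  have hFint : Integrable (𝓕 ⇑h) := (SchwartzMap.fourierTransformCLM ℂ h).integrable
  have hconjint : Integrable fun ξ => (starRingEnd ℂ) (𝓕 (⇑h) ξ) := by
    refine ⟨Complex.continuous_conj.comp_aestronglyMeasurable hFint.1, ?_⟩
    simpa [HasFiniteIntegral] using hFint.2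
  have hflip : (innerₗ (EuclideanSpace ℝ (Fin 3))).flip = innerₗ (EuclideanSpace ℝ (Fin 3)) := by
    apply LinearMap.ext; intro x; apply LinearMap.ext; intro y
    exact real_inner_comm x y
  have hmf := VectorFourier.integral_fourierIntegral_smul_eq_flip
    (L := innerₗ (EuclideanSpace ℝ (Fin 3))) (μ := volume) (ν := volume)
    Real.continuous_fourierChar continuous_inner h.integrable hconjint
  rw [hflip] at hmf
  have hinv : ∀ x, VectorFourier.fourierIntegral Real.fourierChar volume
      (innerₗ (EuclideanSpace ℝ (Fin 3))) (fun ξ => (starRingEnd ℂ) (𝓕 (⇑h) ξ)) x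
      = (starRingEnd ℂ) (h x) := by
    intro x
    rw [conj_fourierIntegral, h.continuous.fourierInv_fourier_eq h.integrable hFint]
  have key : ∫ ξ : EuclideanSpace ℝ (Fin 3), 𝓕 (⇑h) ξ * (starRingEnd ℂ) (𝓕 (⇑h) ξ)
      = ∫ x : EuclideanSpace ℝ (Fin 3), h x * (starRingEnd ℂ) (h x) := by
    calc ∫ ξ : EuclideanSpace ℝ (Fin 3), 𝓕 (⇑h) ξ * (starRingEnd ℂ) (𝓕 (⇑h) ξ)
        = ∫ x : EuclideanSpace ℝ (Fin 3), h x • (VectorFourier.fourierIntegral Real.fourierChar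
            volume (innerₗ (EuclideanSpace ℝ (Fin 3)))
            (fun ξ => (starRingEnd ℂ) (𝓕 (⇑h) ξ)) x) := hmf
    _ = ∫ x : EuclideanSpace ℝ (Fin 3), h x * (starRingEnd ℂ) (h x) := by
        congr 1; funext x; rw [smul_eq_mul, hinv x]
  have key2 : ∫ ξ : EuclideanSpace ℝ (Fin 3), ((‖𝓕 (⇑h) ξ‖ ^ 2 : ℝ) : ℂ)
      = ∫ x : EuclideanSpace ℝ (Fin 3), ((‖h x‖ ^ 2 : ℝ) : ℂ) := by
    simp_rw [Complex.ofReal_pow, ← Complex.mul_conj']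
    exact key
  have e1 : ∫ ξ : EuclideanSpace ℝ (Fin 3), ((‖𝓕 (⇑h) ξ‖ ^ 2 : ℝ) : ℂ)
      = ((∫ ξ : EuclideanSpace ℝ (Fin 3), ‖𝓕 (⇑h) ξ‖ ^ 2 : ℝ) : ℂ) := integral_ofReal
  have e2 : ∫ x : EuclideanSpace ℝ (Fin 3), ((‖h x‖ ^ 2 : ℝ) : ℂ)
      = ((∫ x : EuclideanSpace ℝ (Fin 3), ‖h x‖ ^ 2 : ℝ) : ℂ) := integral_ofReal
  rw [e1, e2] at key2
  exact_mod_cast key2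

lemma FT_eq_fourierIntegral (u : EuclideanSpace ℝ (Fin 3) → ℂ) (k : EuclideanSpace ℝ (Fin 3)) :
    FT u k = c2pi * 𝓕 u ((2 * Real.pi)⁻¹ • k) := by
  rw [FT, Real.fourier_eq]
  congr 1
  congr 1
  funext y
  rw [Circle.smul_def, Real.fourierChar_apply]
  congr 2
  have h1 : ⟪y, (2 * Real.pi)⁻¹ • k⟫ = (2 * Real.pi)⁻¹ * ⟪y, k⟫ :=
    real_inner_smul_right _ _ _
  have h2 : ⟪k, y⟫ = ⟪y, k⟫ := real_inner_comm _ _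
  rw [h1, h2]
  have hπ : (2 * Real.pi) ≠ 0 := by positivity
  have hval : 2 * Real.pi * -((2 * Real.pi)⁻¹ * ⟪y, k⟫) = -⟪y, k⟫ := by
    field_simp
  rw [hval]
  push_cast
  ring

/-- for Schwartz `f` and `t > 0`,
`∫ |u(q,t) − φ₁(q,t)|² dq = ∫ |e^{i|y|²/(2t)} − 1|² |f(y)|² dy`. -/
theorem integral_sq_freeU_sub_phi1 (f : SchwartzMap (EuclideanSpace ℝ (Fin 3)) ℂ)
    (t : ℝ) (ht : 0 < t) :
    ∫ q : EuclideanSpace ℝ (Fin 3),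
        ‖freeU (fun y => f y) q t - phi1 (fun y => f y) q t‖ ^ 2
      = ∫ y : EuclideanSpace ℝ (Fin 3),
          ‖Complex.exp (Complex.I * ((‖y‖ ^ 2 / (2 * t) : ℝ) : ℂ)) - 1‖ ^ 2 * ‖f y‖ ^ 2 := by
  classical
  have htne : t ≠ 0 := ne_of_gt ht
  set g : EuclideanSpace ℝ (Fin 3) → ℂ :=
    fun y => Complex.exp (Complex.I * ((‖y‖ ^ 2 / (2 * t) : ℝ) : ℂ)) with hg_def
  have hg : Function.HasTemperateGrowth g := by
    have h0 := hasTemperateGrowth_phase (E := EuclideanSpace ℝ (Fin 3)) ((2 * t)⁻¹)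
    have hge : g = fun y : EuclideanSpace ℝ (Fin 3) =>
        Complex.exp (Complex.I * (((2 * t)⁻¹ * ‖y‖ ^ 2 : ℝ) : ℂ)) := by
      funext y; simp only [hg_def, div_eq_inv_mul]
    rw [hge]; exact h0
  set h : SchwartzMap (EuclideanSpace ℝ (Fin 3)) ℂ :=
    SchwartzMap.bilinLeftCLM (ContinuousLinearMap.mul ℝ ℂ) hg f - f with hh_def
  have hh : ∀ y, h y = (g y - 1) * f y := by
    intro y
    have e1 : (SchwartzMap.bilinLeftCLM (ContinuousLinearMap.mul ℝ ℂ) hg f) y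
        = f y * g y := rfl
    rw [hh_def, SchwartzMap.sub_apply, e1]
    ring
  -- pointwise identity
  have key : ∀ q : EuclideanSpace ℝ (Fin 3),
      freeU (fun y => f y) q t - phi1 (fun y => f y) q t
        = cIT t * Complex.exp (Complex.I * ((‖q‖ ^ 2 / (2 * t) : ℝ) : ℂ))
            * FT (fun y => h y) (t⁻¹ • q) := by
    intro q
    have hcip : Continuous fun y : EuclideanSpace ℝ (Fin 3) => (⟪t⁻¹ • q, y⟫ : ℝ) :=
      continuous_const.inner continuous_id
    have hconti : Continuous fun y : EuclideanSpace ℝ (Fin 3) =>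
        Complex.exp (-(Complex.I * ((⟪t⁻¹ • q, y⟫ : ℝ) : ℂ))) :=
      Complex.continuous_exp.comp
        ((continuous_const.mul (Complex.continuous_ofReal.comp hcip)).neg)
    have hgcont : Continuous g := by
      rw [hg_def]
      exact Complex.continuous_exp.comp
        (continuous_const.mul (Complex.continuous_ofReal.comp
          ((continuous_norm.pow 2).div_const _)))
    have hexp_norm : ∀ r : ℝ, ‖Complex.exp (Complex.I * (r : ℂ))‖ = 1 := by
      intro r
      rw [Complex.norm_exp, Complex.mul_re, Complex.I_re, Complex.I_im,
        Complex.ofReal_re, Complex.ofReal_im]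
      norm_num
    have hnorm1 : ∀ y : EuclideanSpace ℝ (Fin 3),
        ‖Complex.exp (-(Complex.I * ((⟪t⁻¹ • q, y⟫ : ℝ) : ℂ)))‖ ≤ 1 := by
      intro y
      rw [show -(Complex.I * ((⟪t⁻¹ • q, y⟫ : ℝ) : ℂ))
          = Complex.I * ((-⟪t⁻¹ • q, y⟫ : ℝ) : ℂ) by push_cast; ring]
      exact le_of_eq (hexp_norm _)
    have hnormg : ∀ y : EuclideanSpace ℝ (Fin 3), ‖g y‖ ≤ 1 := by
      intro y
      rw [hg_def]
      exact le_of_eq (hexp_norm _)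
    have hi2 : Integrable fun y : EuclideanSpace ℝ (Fin 3) =>
        Complex.exp (-(Complex.I * ((⟪t⁻¹ • q, y⟫ : ℝ) : ℂ))) * f y :=
      f.integrable.bdd_mul hconti.aestronglyMeasurable (c := 1) (Filter.Eventually.of_forall hnorm1)
    have hi1 : Integrable fun y : EuclideanSpace ℝ (Fin 3) =>
        (Complex.exp (-(Complex.I * ((⟪t⁻¹ • q, y⟫ : ℝ) : ℂ))) * g y) * f y :=
      f.integrable.bdd_mul (hconti.mul hgcont).aestronglyMeasurable
        (c := 1) (Filter.Eventually.of_forall fun y => by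
          rw [norm_mul]
          exact mul_le_one₀ (hnorm1 y) (norm_nonneg _) (hnormg y))
    have hexp : ∀ y : EuclideanSpace ℝ (Fin 3),
        Complex.exp (Complex.I * ((‖q - y‖ ^ 2 / (2 * t) : ℝ) : ℂ)) * f y
          = Complex.exp (Complex.I * ((‖q‖ ^ 2 / (2 * t) : ℝ) : ℂ)) *
            ((Complex.exp (-(Complex.I * ((⟪t⁻¹ • q, y⟫ : ℝ) : ℂ))) * g y) * f y) := by
      intro y
      have hfac : Complex.exp (Complex.I * ((‖q - y‖ ^ 2 / (2 * t) : ℝ) : ℂ))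
          = Complex.exp (Complex.I * ((‖q‖ ^ 2 / (2 * t) : ℝ) : ℂ)) *
            (Complex.exp (-(Complex.I * ((⟪t⁻¹ • q, y⟫ : ℝ) : ℂ))) * g y) := by
        rw [hg_def, ← Complex.exp_add, ← Complex.exp_add]
        congr 1
        have hq : ‖q - y‖ ^ 2 = ‖q‖ ^ 2 - 2 * ⟪q, y⟫ + ‖y‖ ^ 2 :=
          norm_sub_sq_real q y
        have hin : ⟪t⁻¹ • q, y⟫ = t⁻¹ * ⟪q, y⟫ := real_inner_smul_left _ _ _
        rw [hq, hin]
        push_cast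
        field_simp
        ring
      rw [hfac]
      ring
    have h3 : FT (fun y => h y) (t⁻¹ • q)
        = c2pi * ∫ y : EuclideanSpace ℝ (Fin 3),
            Complex.exp (-(Complex.I * ((⟪t⁻¹ • q, y⟫ : ℝ) : ℂ))) * h y := rfl
    have h4 : ∫ y : EuclideanSpace ℝ (Fin 3),
        Complex.exp (-(Complex.I * ((⟪t⁻¹ • q, y⟫ : ℝ) : ℂ))) * h y
        = (∫ y : EuclideanSpace ℝ (Fin 3),
            (Complex.exp (-(Complex.I * ((⟪t⁻¹ • q, y⟫ : ℝ) : ℂ))) * g y) * f y)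
          - ∫ y : EuclideanSpace ℝ (Fin 3),
            Complex.exp (-(Complex.I * ((⟪t⁻¹ • q, y⟫ : ℝ) : ℂ))) * f y := by
      rw [← integral_sub hi1 hi2]
      congr 1
      funext y
      rw [hh y]
      ring
    have h5 : ∫ y : EuclideanSpace ℝ (Fin 3),
        Complex.exp (Complex.I * ((‖q - y‖ ^ 2 / (2 * t) : ℝ) : ℂ)) * f y
        = Complex.exp (Complex.I * ((‖q‖ ^ 2 / (2 * t) : ℝ) : ℂ)) *
          ∫ y : EuclideanSpace ℝ (Fin 3),
            (Complex.exp (-(Complex.I * ((⟪t⁻¹ • q, y⟫ : ℝ) : ℂ))) * g y) * f y := by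
      rw [← integral_const_mul]
      congr 1
      funext y
      exact hexp y
    rw [freeU, phi1, FT, h5, h3, h4]
    ring
  have hexp_norm : ∀ r : ℝ, ‖Complex.exp (Complex.I * (r : ℂ))‖ = 1 := by
    intro r
    rw [Complex.norm_exp, Complex.mul_re, Complex.I_re, Complex.I_im,
      Complex.ofReal_re, Complex.ofReal_im]
    norm_num
  have hcIT : ‖cIT t‖ ^ 2 = (t ^ 3)⁻¹ := by
    rw [cIT, norm_mul]
    have h1 : ‖Complex.exp (-(3 * Real.pi / 4) * Complex.I)‖ = 1 := by
      rw [Complex.norm_exp]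
      simp
    rw [h1, one_mul, Complex.norm_real, Real.norm_eq_abs,
      _root_.abs_of_nonneg (Real.rpow_nonneg ht.le _)]
    rw [← Real.rpow_natCast (t ^ (-(3/2) : ℝ)) 2, ← Real.rpow_mul ht.le]
    norm_num
  have h2pi : (0:ℝ) < 2 * Real.pi := by positivity
  have hc2pi : ‖c2pi‖ ^ 2 = ((2 * Real.pi) ^ 3)⁻¹ := by
    rw [c2pi, Complex.norm_real, Real.norm_eq_abs,
      _root_.abs_of_nonneg (Real.rpow_nonneg h2pi.le _)]
    rw [← Real.rpow_natCast ((2 * Real.pi) ^ (-(3/2) : ℝ)) 2, ← Real.rpow_mul h2pi.le]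
    norm_num
  calc ∫ q : EuclideanSpace ℝ (Fin 3),
        ‖freeU (fun y => f y) q t - phi1 (fun y => f y) q t‖ ^ 2
      = ∫ q : EuclideanSpace ℝ (Fin 3),
          (t ^ 3)⁻¹ * ‖FT (fun y => h y) (t⁻¹ • q)‖ ^ 2 := by
        congr 1
        funext q
        rw [key q, norm_mul, norm_mul, mul_pow, mul_pow, hcIT, hexp_norm, one_pow, mul_one]
  _ = (t ^ 3)⁻¹ * ∫ q : EuclideanSpace ℝ (Fin 3),
        ‖FT (fun y => h y) (t⁻¹ • q)‖ ^ 2 := integral_const_mul _ _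
  _ = (t ^ 3)⁻¹ * (|t ^ 3| • ∫ k : EuclideanSpace ℝ (Fin 3),
        ‖FT (fun y => h y) k‖ ^ 2) := by
        rw [MeasureTheory.Measure.integral_comp_inv_smul volume
          (fun k => ‖FT (fun y => h y) k‖ ^ 2) t, finrank_euclideanSpace, Fintype.card_fin]
  _ = ∫ k : EuclideanSpace ℝ (Fin 3), ‖FT (fun y => h y) k‖ ^ 2 := by
        rw [_root_.abs_of_nonneg (by positivity : (0:ℝ) ≤ t ^ 3), smul_eq_mul, ← mul_assoc,
          inv_mul_cancel₀ (by positivity : (t:ℝ) ^ 3 ≠ 0), one_mul]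
  _ = ∫ k : EuclideanSpace ℝ (Fin 3),
        ‖c2pi‖ ^ 2 * ‖𝓕 (fun y => h y) ((2 * Real.pi)⁻¹ • k)‖ ^ 2 := by
        congr 1
        funext k
        rw [FT_eq_fourierIntegral, norm_mul, mul_pow]
  _ = ‖c2pi‖ ^ 2 * ∫ k : EuclideanSpace ℝ (Fin 3),
        ‖𝓕 (fun y => h y) ((2 * Real.pi)⁻¹ • k)‖ ^ 2 := integral_const_mul _ _
  _ = ‖c2pi‖ ^ 2 * (|(2 * Real.pi) ^ 3| • ∫ ξ : EuclideanSpace ℝ (Fin 3),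
        ‖𝓕 (fun y => h y) ξ‖ ^ 2) := by
        rw [MeasureTheory.Measure.integral_comp_inv_smul volume
          (fun ξ => ‖𝓕 (fun y => h y) ξ‖ ^ 2) (2 * Real.pi), finrank_euclideanSpace,
          Fintype.card_fin]
  _ = ∫ ξ : EuclideanSpace ℝ (Fin 3), ‖𝓕 (fun y => h y) ξ‖ ^ 2 := by
        rw [hc2pi, _root_.abs_of_nonneg (by positivity : (0:ℝ) ≤ (2 * Real.pi) ^ 3), smul_eq_mul,
          ← mul_assoc, inv_mul_cancel₀ (by positivity : ((2 * Real.pi):ℝ) ^ 3 ≠ 0), one_mul]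
  _ = ∫ x : EuclideanSpace ℝ (Fin 3), ‖h x‖ ^ 2 := plancherel_schwartz h
  _ = ∫ y : EuclideanSpace ℝ (Fin 3),
        ‖Complex.exp (Complex.I * ((‖y‖ ^ 2 / (2 * t) : ℝ) : ℂ)) - 1‖ ^ 2 * ‖f y‖ ^ 2 := by
        congr 1
        funext y
        rw [hh y, norm_mul, mul_pow, hg_def]

end
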